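/- arXiv:1702.04838 — 2 statements merged into one kernel-verified Lean document; each statement's English description precedes it below -/
import Mathlib

section
/- For μ = 3 (so ν = 1/4), the set Λ of points of [ν − 1, ν] whose forward orbit under g never leaves [ν − 1, ν] is exactly the middle-thirds Cantor set translated to the interval [ν − 1, ν]: Λ = {c − 3/4 : c ∈ C}, where C ⊆ [0,1] is the standard middle-thirds Cantor set. -/
open Set

/-- The piecewise-linear threshold map `g(1,1,·)` of the chaotic NOR gate,
with `ν = 1/(1+μ)`. -/
noncomputable def gmap (μ : ℝ) : ℝ → ℝ := fun x =>
  let ν : ℝ := 1 / (1 + μ)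
  if x ≤ ν - 1 / 2 then ν - 1 + μ * (1 + x - ν) else ν - 1 + μ * (ν - x)

/-- The tent map with slope 3. -/
noncomputable def tentMap : ℝ → ℝ := fun y => if y ≤ 1 / 2 then 3 * y else 3 - 3 * y

lemma gmap_conj (x : ℝ) : gmap 3 x = tentMap (x + 3 / 4) - 3 / 4 := by
  unfold gmap tentMap
  norm_num
  rcases le_or_gt x (-(1/4) : ℝ) with h | h
  · rw [if_pos h, if_pos (by linarith)]; ring
  · rw [if_neg (by linarith), if_neg (by linarith)]; ring

lemma gmap_iter_conj (n : ℕ) (x : ℝ) :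
    (gmap 3)^[n] x = tentMap^[n] (x + 3 / 4) - 3 / 4 := by
  induction n generalizing x with
  | zero => simp
  | succ n ih =>
    rw [Function.iterate_succ_apply, Function.iterate_succ_apply, gmap_conj]
    rw [ih]
    ring_nf

lemma preCantorSet_symm {n : ℕ} {x : ℝ} (hx : x ∈ preCantorSet n) :
    1 - x ∈ preCantorSet n := by
  induction n generalizing x with
  | zero => exact ⟨by linarith [hx.2], by linarith [hx.1]⟩
  | succ n ih =>
    rcases hx with ⟨a, ha, rfl⟩ | ⟨a, ha, rfl⟩
    · exact Or.inr ⟨1 - a, ih ha, by ring⟩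
    · exact Or.inl ⟨1 - a, ih ha, by ring⟩

lemma preCantorSet_subset_unit (n : ℕ) : preCantorSet n ⊆ Icc 0 1 := by
  induction n with
  | zero => exact subset_rfl
  | succ n ih =>
    rintro x (⟨a, ha, rfl⟩ | ⟨a, ha, rfl⟩)
    · obtain ⟨h0, h1⟩ := ih ha; constructor <;> simp <;> linarith
    · obtain ⟨h0, h1⟩ := ih ha; constructor <;> simp <;> linarith

lemma mem_preCantorSet_succ_iff (n : ℕ) (y : ℝ) :
    y ∈ preCantorSet (n + 1) ↔ y ∈ Icc (0 : ℝ) 1 ∧ tentMap y ∈ preCantorSet n := by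
  constructor
  · rintro (⟨a, ha, rfl⟩ | ⟨a, ha, rfl⟩)
    · obtain ⟨h0, h1⟩ := preCantorSet_subset_unit n ha
      refine ⟨⟨by linarith, by linarith⟩, ?_⟩
      rw [tentMap, if_pos (by linarith)]
      have : (3 : ℝ) * (a / 3) = a := by ring
      rw [this]; exact ha
    · obtain ⟨h0, h1⟩ := preCantorSet_subset_unit n ha
      refine ⟨⟨by linarith, by linarith⟩, ?_⟩
      rw [tentMap, if_neg (by simp; linarith)]
      have : (3 : ℝ) - 3 * ((2 + a) / 3) = 1 - a := by ring
      rw [this]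
      exact preCantorSet_symm ha
  · rintro ⟨⟨h0, h1⟩, hT⟩
    rcases le_or_gt y (1/2 : ℝ) with h | h
    · rw [tentMap, if_pos h] at hT
      exact Or.inl ⟨3 * y, hT, by ring⟩
    · rw [tentMap, if_neg (by linarith)] at hT
      refine Or.inr ⟨1 - (3 - 3 * y), preCantorSet_symm hT, by ring⟩

lemma tent_orbit_iff (y : ℝ) :
    (∀ n : ℕ, tentMap^[n] y ∈ Icc (0 : ℝ) 1) ↔ y ∈ cantorSet := by
  constructor
  · intro h
    rw [cantorSet, mem_iInter]
    intro n
    induction n generalizing y with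
    | zero => exact h 0
    | succ n ih =>
      rw [mem_preCantorSet_succ_iff]
      exact ⟨h 0, ih (tentMap y) (fun k => by
        rw [← Function.iterate_succ_apply]; exact h (k + 1))⟩
  · intro h n
    induction n generalizing y with
    | zero => exact cantorSet_subset_unitInterval h
    | succ n ih =>
      rw [Function.iterate_succ_apply]
      apply ih
      rw [cantorSet, mem_iInter] at h ⊢
      intro k
      exact ((mem_preCantorSet_succ_iff k y).mp (h (k + 1))).2

/-- For `μ = 3` (so `ν = 1/4`), the set of points of `[ν − 1, ν] = [−3/4, 1/4]`
whose forward orbit under `g` never leaves `[ν − 1, ν]` is exactly the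
middle-thirds Cantor set translated by `−3/4`. -/
theorem gmap_invariant_set_eq_translated_cantorSet (μ : ℝ) (hμ : μ = 3)
    (ν : ℝ) (hν : ν = 1 / (1 + μ))
    (Λ : Set ℝ) (hΛ : Λ = {x ∈ Icc (ν - 1) ν | ∀ n : ℕ, (gmap μ)^[n] x ∈ Icc (ν - 1) ν}) :
    Λ = (fun c : ℝ => c - 3 / 4) '' cantorSet := by
  subst hμ hν hΛ
  norm_num
  ext x
  simp only [mem_setOf_eq, mem_image]
  constructor
  · rintro ⟨-, h⟩
    refine ⟨x + 3 / 4, ?_, by ring⟩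
    rw [← tent_orbit_iff]
    intro n
    have := h n
    rw [gmap_iter_conj] at this
    norm_num at this ⊢
    constructor <;> linarith [this.1, this.2]
  · rintro ⟨c, hc, rfl⟩
    have hall := (tent_orbit_iff c).mpr hc
    have key : ∀ n : ℕ, -(3/4 : ℝ) ≤ (gmap 3)^[n] (c - 3/4) ∧ (gmap 3)^[n] (c - 3/4) ≤ 1/4 := by
      intro n
      rw [gmap_iter_conj]
      have : c - 3/4 + 3/4 = c := by ring
      rw [this]
      obtain ⟨h0, h1⟩ := hall n
      constructor <;> linarith
    obtain ⟨h0, h1⟩ := key 0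
    simp at h0 h1
    exact ⟨⟨by linarith, by linarith⟩, key⟩
end

section
/- There exists an uncountable set S ⊆ [−μν, μν] containing no periodic points of f such that for all p, q ∈ S with p ≠ q, limsup_{n→∞} |fⁿ(p) − fⁿ(q)| > 0 and liminf_{n→∞} |fⁿ(p) − fⁿ(q)| = 0; that is, the interval [−μν, μν] contains chaotic orbits of f in the sense of Li and Yorke. -/
/-!
On `J₊ = [ν/μ, ν]` and `J₋ = [-ν, -ν/μ]` the square `f ∘ f` is affine, `x ↦ x / r ± e` with
`r = (1 - μ) / (μ (1 + μ))`, `|r| < 1`, and `e = ν (μ² + 1) / (μ - 1)`; each branch maps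
its piece onto a set containing `[-ν, ν] ⊇ J₊ ∪ J₋`. Hence every itinerary `ω : ℕ → Bool`
through `J₊, J₋` is realised by the point `e · ∑ ±rⁿ⁺¹`, on which `f ∘ f` acts as the shift.
Points whose itineraries differ at time `m` are `2ν/μ` apart after `2m` steps, and points
whose itineraries agree on `K` symbols from time `m` on are `2ν|r|ᴷ`-close after `2m` steps.
An uncountable family of aperiodic sequences that pairwise differ infinitely often and agree
on arbitrarily long blocks thus yields a scrambled set.
-/

open Set Filter

/-- The piecewise-linear threshold map `f(1,1,·)` of the chaotic NOR gate. -/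
noncomputable def fmap (μ ν : ℝ) : ℝ → ℝ := fun x =>
  if x ≤ -ν then (1 + μ) / (1 - μ) * (x + ν) - μ * ν
  else if x ≤ ν then μ * x
  else (1 + μ) / (1 - μ) * (x - ν) + μ * ν

instance : Uncountable (ℕ → Bool) := by
  rw [← Cardinal.aleph0_lt_mk_iff]
  simpa using Cardinal.cantor Cardinal.aleph0

lemma not_countable_range_of_injective {α β : Type*} [Uncountable α] {f : α → β}
    (hf : Function.Injective f) : ¬ (range f).Countable := by
  rw [← image_univ]
  exact fun h => not_countable_univ (countable_of_injective_of_countable_image hf.injOn h)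

lemma liminf_eq_zero_of_frequently_le {ι : Type*} {l : Filter ι} {u : ι → ℝ} (h₀ : ∀ i, 0 ≤ u i)
    (h : ∀ ε > 0, ∃ᶠ i in l, u i ≤ ε) : liminf u l = 0 :=
  le_antisymm
    (le_of_forall_pos_le_add fun ε hε => by
      simpa using liminf_le_of_frequently_le (h ε hε) (isBoundedUnder_of ⟨0, h₀⟩))
    (le_liminf_of_le (IsCoboundedUnder.of_frequently_le (h 1 one_pos)) (.of_forall h₀))

lemma tendsto_two_mul_atTop : Tendsto (fun m : ℕ => 2 * m) atTop atTop :=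
  tendsto_id.const_mul_atTop' two_pos

def boolSign (b : Bool) : ℝ := if b then 1 else -1

@[simp] lemma boolSign_true : boolSign true = 1 := rfl

@[simp] lemma boolSign_false : boolSign false = -1 := rfl

lemma abs_boolSign (b : Bool) : |boolSign b| = 1 := by
  cases b <;> simp

section SignedSeries

variable {r : ℝ}

noncomputable def signedSeries (r : ℝ) (ω : ℕ → Bool) : ℝ :=
  ∑' n, boolSign (ω n) * r ^ (n + 1)

lemma abs_boolSign_mul_pow (ω : ℕ → Bool) (n : ℕ) :
    |boolSign (ω n) * r ^ (n + 1)| = |r| * |r| ^ n := by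
  rw [abs_mul, abs_boolSign, one_mul, abs_pow, pow_succ']

lemma summable_abs_pow_succ (hr : |r| < 1) : Summable fun n : ℕ => |r| * |r| ^ n :=
  (summable_geometric_of_lt_one (abs_nonneg r) hr).mul_left _

lemma summable_boolSign_mul_pow (hr : |r| < 1) (ω : ℕ → Bool) :
    Summable fun n => boolSign (ω n) * r ^ (n + 1) :=
  .of_norm <| by simpa only [Real.norm_eq_abs, abs_boolSign_mul_pow] using summable_abs_pow_succ hr

lemma signedSeries_eq (hr : |r| < 1) (ω : ℕ → Bool) :
    signedSeries r ω = r * (boolSign (ω 0) + signedSeries r fun n => ω (n + 1)) := by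
  rw [signedSeries, (summable_boolSign_mul_pow hr ω).tsum_eq_zero_add, signedSeries,
    mul_add, ← tsum_mul_left]
  congr 1
  · ring
  · exact tsum_congr fun n => by ring

lemma abs_signedSeries_le (hr : |r| < 1) (ω : ℕ → Bool) :
    |signedSeries r ω| ≤ |r| / (1 - |r|) := by
  have hnorm := norm_tsum_le_tsum_norm (f := fun n => boolSign (ω n) * r ^ (n + 1)) <| by
    simpa only [Real.norm_eq_abs, abs_boolSign_mul_pow] using summable_abs_pow_succ hr
  calc |signedSeries r ω| ≤ ∑' n : ℕ, |r| * |r| ^ n := by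
        simpa only [Real.norm_eq_abs, abs_boolSign_mul_pow, signedSeries] using hnorm
    _ = |r| / (1 - |r|) := by
        rw [tsum_mul_left, tsum_geometric_of_lt_one (abs_nonneg r) hr, div_eq_mul_inv]

lemma abs_signedSeries_sub_le (hr : |r| < 1) {K : ℕ} {ω ω' : ℕ → Bool}
    (h : ∀ i < K, ω i = ω' i) :
    |signedSeries r ω - signedSeries r ω'| ≤ 2 * |r| ^ K * (|r| / (1 - |r|)) := by
  induction K generalizing ω ω' with
  | zero =>
    have := abs_signedSeries_le hr ω
    have := abs_signedSeries_le hr ω'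
    rw [pow_zero, mul_one, two_mul]
    exact (abs_sub _ _).trans (by linarith)
  | succ K ih =>
    have hshift := ih (ω := fun n => ω (n + 1)) (ω' := fun n => ω' (n + 1))
      fun i hi => h (i + 1) (by omega)
    rw [signedSeries_eq hr ω, signedSeries_eq hr ω', h 0 K.succ_pos, ← mul_sub,
      add_sub_add_left_eq_sub, abs_mul, pow_succ]
    calc |r| * |_ - _| ≤ |r| * (2 * |r| ^ K * (|r| / (1 - |r|))) := by gcongr
      _ = _ := by ring

end SignedSeries

section Code

/-- `true` at the even squares, the bit `u (unpair j).1` at `(2j+1)²` and `false` elsewhere: every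
bit of `u` is read infinitely often, and the gaps between squares are arbitrarily long runs of
`false` shared by all codes. -/
def code (u : ℕ → Bool) (n : ℕ) : Bool :=
  if n.sqrt * n.sqrt ≠ n then false else if Even n.sqrt then true else u (n.sqrt / 2).unpair.1

variable {u u' : ℕ → Bool}

lemma code_zero : code u 0 = true := by
  simp [code]

lemma code_eq_false {k i : ℕ} (h₁ : 1 ≤ i) (h₂ : i ≤ 2 * k) : code u (k * k + i) = false := by
  rw [code, Nat.sqrt_add_eq k (by omega), if_pos (by omega)]

lemma code_odd_sq (j : ℕ) : code u ((2 * j + 1) * (2 * j + 1)) = u j.unpair.1 := by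
  rw [code, Nat.sqrt_eq, if_neg (not_not.2 rfl), if_neg (by simp [parity_simps]),
    show (2 * j + 1) / 2 = j by omega]

lemma code_shift_ne {n : ℕ} (hn : 0 < n) : (fun k => code u (n + k)) ≠ code u := by
  intro h
  have hmul : ∀ j, code u (j * n) = true := by
    intro j
    induction j with
    | zero => simpa using code_zero
    | succ j ih => rw [add_one_mul, add_comm, ← ih]; exact congrFun h _
  have := hmul (n + 1)
  rw [add_one_mul, code_eq_false hn (by omega)] at this
  exact Bool.false_ne_true this

lemma frequently_code_ne (h : u ≠ u') : ∃ᶠ m in atTop, code u m ≠ code u' m := by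
  obtain ⟨i, hi⟩ := Function.ne_iff.1 h
  refine frequently_atTop.2 fun N => ⟨(2 * Nat.pair i N + 1) * (2 * Nat.pair i N + 1), ?_, ?_⟩
  · nlinarith [Nat.right_le_pair i N]
  · rwa [code_odd_sq, code_odd_sq, Nat.unpair_pair]

lemma code_injective : Function.Injective code := fun _ _ h =>
  not_not.1 fun hne => (frequently_code_ne hne).exists.elim fun m hm => hm (congrFun h m)

lemma frequently_forall_code_eq_false (K : ℕ) :
    ∃ᶠ a in atTop, ∀ u, ∀ i < K, code u (a + i) = false := by
  refine frequently_atTop.2 fun N => ⟨(N + K) * (N + K) + 1, by nlinarith, fun u i hi => ?_⟩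
  rw [add_assoc]
  exact code_eq_false (by omega) (by omega)

end Code

section Fmap

variable {μ ν x : ℝ}

lemma fmap_of_le_neg (h : x ≤ -ν) :
    fmap μ ν x = (1 + μ) / (1 - μ) * (x + ν) - μ * ν :=
  if_pos h

lemma fmap_of_abs_le (h : |x| ≤ ν) : fmap μ ν x = μ * x := by
  obtain ⟨h₁, h₂⟩ := abs_le.1 h
  unfold fmap
  split_ifs with h₃
  · rw [le_antisymm h₃ h₁]; ring
  · rfl

lemma fmap_of_le (hν : 0 ≤ ν) (h : ν ≤ x) :
    fmap μ ν x = (1 + μ) / (1 - μ) * (x - ν) + μ * ν := by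
  unfold fmap
  split_ifs with h₁ h₂
  · obtain rfl : x = 0 := by linarith
    obtain rfl : ν = 0 := by linarith
    simp
  · rw [le_antisymm h₂ h]; ring
  · rfl

end Fmap

section Itinerary

variable {μ ν : ℝ}

noncomputable def branchRatio (μ : ℝ) : ℝ := (1 - μ) / (μ * (1 + μ))

noncomputable def branchShift (μ ν : ℝ) : ℝ := ν * (μ ^ 2 + 1) / (μ - 1)

noncomputable def itineraryPoint (μ ν : ℝ) (ω : ℕ → Bool) : ℝ :=
  branchShift μ ν * signedSeries (branchRatio μ) ω

lemma branchRatio_neg (hμ : 1 < μ) : branchRatio μ < 0 :=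
  div_neg_of_neg_of_pos (by linarith) (by nlinarith)

lemma abs_branchRatio_lt_one (hμ : 1 < μ) : |branchRatio μ| < 1 := by
  refine abs_lt.2 ⟨?_, by linarith [branchRatio_neg hμ]⟩
  rw [branchRatio, lt_div_iff₀ (by nlinarith)]
  nlinarith

lemma branchShift_pos (hμ : 1 < μ) (hν : 0 < ν) : 0 < branchShift μ ν :=
  div_pos (by positivity) (by linarith)

lemma branchShift_mul_abs_branchRatio_div (hμ : 1 < μ) :
    branchShift μ ν * (|branchRatio μ| / (1 - |branchRatio μ|)) = ν := by
  have : μ - 1 ≠ 0 := by linarith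
  have : μ ^ 2 + 1 ≠ 0 := by positivity
  have hden : 1 - -((1 - μ) / (μ * (1 + μ))) = (μ ^ 2 + 1) / (μ * (1 + μ)) := by
    field_simp
    ring
  rw [abs_of_neg (branchRatio_neg hμ), branchShift, branchRatio, hden]
  field_simp
  ring

lemma branchRatio_mul_branchShift_add (hμ : 1 < μ) :
    branchRatio μ * (branchShift μ ν + ν) = -ν := by
  have : μ - 1 ≠ 0 := by linarith
  have : 1 - μ ≠ 0 := by linarith
  rw [branchShift, branchRatio]
  field_simp
  ring

lemma div_le_neg_branchRatio_mul_branchShift_sub (hμ : 1 < μ) (hν : 0 < ν) :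
    ν / μ ≤ -(branchRatio μ * (branchShift μ ν - ν)) := by
  have : μ - 1 ≠ 0 := by linarith
  have key : -(branchRatio μ * (branchShift μ ν - ν)) - ν / μ =
      ν * (μ - 1) ^ 2 / (μ * (1 + μ)) := by
    rw [branchShift, branchRatio]
    field_simp
    ring
  have : 0 ≤ ν * (μ - 1) ^ 2 / (μ * (1 + μ)) := by positivity
  linarith

lemma itineraryPoint_eq (hμ : 1 < μ) (ω : ℕ → Bool) :
    itineraryPoint μ ν ω = branchRatio μ *
      (branchShift μ ν * boolSign (ω 0) + itineraryPoint μ ν fun n => ω (n + 1)) := by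
  rw [itineraryPoint, signedSeries_eq (abs_branchRatio_lt_one hμ), itineraryPoint]
  ring

lemma abs_itineraryPoint_le (hμ : 1 < μ) (hν : 0 < ν) (ω : ℕ → Bool) :
    |itineraryPoint μ ν ω| ≤ ν := by
  rw [itineraryPoint, abs_mul, abs_of_pos (branchShift_pos hμ hν)]
  calc _ ≤ branchShift μ ν * (|branchRatio μ| / (1 - |branchRatio μ|)) := by
        gcongr
        · exact (branchShift_pos hμ hν).le
        · exact abs_signedSeries_le (abs_branchRatio_lt_one hμ) ω
    _ = ν := branchShift_mul_abs_branchRatio_div hμ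

lemma itineraryPoint_mem_of_false (hμ : 1 < μ) (hν : 0 < ν) {ω : ℕ → Bool} (h : ω 0 = false) :
    itineraryPoint μ ν ω ∈ Icc (ν / μ) ν := by
  obtain ⟨h₁, h₂⟩ := abs_le.1 (abs_itineraryPoint_le hμ hν fun n => ω (n + 1))
  have hr := branchRatio_neg hμ
  have := branchRatio_mul_branchShift_add (ν := ν) hμ
  have := div_le_neg_branchRatio_mul_branchShift_sub hμ hν
  rw [itineraryPoint_eq hμ, h, boolSign_false]
  constructor <;> nlinarith

lemma itineraryPoint_mem_of_true (hμ : 1 < μ) (hν : 0 < ν) {ω : ℕ → Bool} (h : ω 0 = true) :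
    itineraryPoint μ ν ω ∈ Icc (-ν) (-(ν / μ)) := by
  obtain ⟨h₁, h₂⟩ := abs_le.1 (abs_itineraryPoint_le hμ hν fun n => ω (n + 1))
  have hr := branchRatio_neg hμ
  have := branchRatio_mul_branchShift_add (ν := ν) hμ
  have := div_le_neg_branchRatio_mul_branchShift_sub hμ hν
  rw [itineraryPoint_eq hμ, h, boolSign_true]
  constructor <;> nlinarith

end Itinerary

section Dynamics

variable {μ ν : ℝ}

lemma fmap_fmap_of_mem_right (hμ : 1 < μ) (hν : 0 < ν) {x : ℝ} (hx : x ∈ Icc (ν / μ) ν) :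
    fmap μ ν (fmap μ ν x) = x / branchRatio μ + branchShift μ ν := by
  have hμ₀ : 0 < μ := by linarith
  have hνx : ν ≤ μ * x := (div_le_iff₀' hμ₀).1 hx.1
  rw [fmap_of_abs_le (abs_le.2 ⟨by linarith [div_pos hν hμ₀, hx.1], hx.2⟩), fmap_of_le hν.le hνx,
    branchRatio, branchShift]
  have : 1 - μ ≠ 0 := by linarith
  have : μ - 1 ≠ 0 := by linarith
  field_simp
  ring

lemma fmap_fmap_of_mem_left (hμ : 1 < μ) (hν : 0 < ν) {x : ℝ} (hx : x ∈ Icc (-ν) (-(ν / μ))) :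
    fmap μ ν (fmap μ ν x) = x / branchRatio μ - branchShift μ ν := by
  have hμ₀ : 0 < μ := by linarith
  have hxν : μ * x ≤ -ν := by
    have := mul_le_mul_of_nonneg_left hx.2 hμ₀.le
    rwa [mul_neg, mul_div_cancel₀ _ hμ₀.ne'] at this
  rw [fmap_of_abs_le (abs_le.2 ⟨hx.1, by linarith [div_pos hν hμ₀, hx.2]⟩), fmap_of_le_neg hxν,
    branchRatio, branchShift]
  have : 1 - μ ≠ 0 := by linarith
  have : μ - 1 ≠ 0 := by linarith
  field_simp
  ring

lemma fmap_fmap_itineraryPoint (hμ : 1 < μ) (hν : 0 < ν) (ω : ℕ → Bool) :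
    fmap μ ν (fmap μ ν (itineraryPoint μ ν ω)) = itineraryPoint μ ν fun n => ω (n + 1) := by
  have hr := (branchRatio_neg hμ).ne
  have hrec := itineraryPoint_eq (ν := ν) hμ ω
  cases h : ω 0
  · rw [fmap_fmap_of_mem_right hμ hν (itineraryPoint_mem_of_false hμ hν h), hrec,
      mul_div_cancel_left₀ _ hr, h, boolSign_false]
    ring
  · rw [fmap_fmap_of_mem_left hμ hν (itineraryPoint_mem_of_true hμ hν h), hrec,
      mul_div_cancel_left₀ _ hr, h, boolSign_true]
    ring

lemma iterate_fmap_two_mul_itineraryPoint (hμ : 1 < μ) (hν : 0 < ν) (m : ℕ) (ω : ℕ → Bool) :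
    (fmap μ ν)^[2 * m] (itineraryPoint μ ν ω) = itineraryPoint μ ν fun n => ω (m + n) := by
  induction m generalizing ω with
  | zero => simp
  | succ m ih =>
    rw [mul_add_one, Function.iterate_add_apply, Function.iterate_succ_apply',
      Function.iterate_one, fmap_fmap_itineraryPoint hμ hν, ih]
    simp only [add_assoc, add_comm 1]

lemma abs_iterate_fmap_itineraryPoint_le (hμ : 1 < μ) (hν : 0 < ν) (ω : ℕ → Bool) (n : ℕ) :
    |(fmap μ ν)^[n] (itineraryPoint μ ν ω)| ≤ μ * ν := by
  obtain ⟨m, rfl | rfl⟩ := Nat.even_or_odd' n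
  · rw [iterate_fmap_two_mul_itineraryPoint hμ hν]
    exact (abs_itineraryPoint_le hμ hν _).trans (le_mul_of_one_le_left hν.le hμ.le)
  · have hx := abs_itineraryPoint_le hμ hν fun n => ω (m + n)
    rw [Function.iterate_succ_apply', iterate_fmap_two_mul_itineraryPoint hμ hν,
      fmap_of_abs_le hx, abs_mul, abs_of_pos (by linarith : 0 < μ)]
    gcongr

lemma le_abs_itineraryPoint_sub (hμ : 1 < μ) (hν : 0 < ν) {ω ω' : ℕ → Bool} (h : ω 0 ≠ ω' 0) :
    2 * ν / μ ≤ |itineraryPoint μ ν ω - itineraryPoint μ ν ω'| := by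
  have key : ∀ {a b : ℕ → Bool}, a 0 = false → b 0 = true →
      2 * ν / μ ≤ itineraryPoint μ ν a - itineraryPoint μ ν b := fun ha hb => by
    rw [mul_div_assoc, two_mul]
    linarith [(itineraryPoint_mem_of_false hμ hν ha).1, (itineraryPoint_mem_of_true hμ hν hb).2]
  cases ha : ω 0 <;> cases hb : ω' 0 <;> simp only [ha, hb, ne_eq, not_true_eq_false] at h
  · exact le_abs.2 (.inl (key ha hb))
  · exact le_abs.2 (.inr (by linarith [key hb ha]))

lemma itineraryPoint_injective (hμ : 1 < μ) (hν : 0 < ν) :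
    Function.Injective (itineraryPoint μ ν) := by
  intro ω ω' h
  by_contra hne
  obtain ⟨m, hm⟩ := Function.ne_iff.1 hne
  have := le_abs_itineraryPoint_sub hμ hν (ω := fun n => ω (m + n)) (ω' := fun n => ω' (m + n))
    (by simpa using hm)
  rw [← iterate_fmap_two_mul_itineraryPoint hμ hν, ← iterate_fmap_two_mul_itineraryPoint hμ hν, h,
    sub_self, abs_zero] at this
  exact this.not_gt (by positivity)

lemma shift_eq_of_iterate_fmap_eq (hμ : 1 < μ) (hν : 0 < ν) {n : ℕ} {ω : ℕ → Bool}
    (h : (fmap μ ν)^[n] (itineraryPoint μ ν ω) = itineraryPoint μ ν ω) :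
    (fun k => ω (n + k)) = ω := by
  refine itineraryPoint_injective hμ hν ?_
  rw [← iterate_fmap_two_mul_itineraryPoint hμ hν, two_mul, Function.iterate_add_apply, h, h]

lemma abs_itineraryPoint_sub_le (hμ : 1 < μ) (hν : 0 < ν) {K : ℕ} {ω ω' : ℕ → Bool}
    (h : ∀ i < K, ω i = ω' i) :
    |itineraryPoint μ ν ω - itineraryPoint μ ν ω'| ≤ 2 * ν * |branchRatio μ| ^ K := by
  rw [itineraryPoint, itineraryPoint, ← mul_sub, abs_mul, abs_of_pos (branchShift_pos hμ hν)]
  calc _ ≤ branchShift μ ν * (2 * |branchRatio μ| ^ K *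
        (|branchRatio μ| / (1 - |branchRatio μ|))) := by
        gcongr
        · exact (branchShift_pos hμ hν).le
        · exact abs_signedSeries_sub_le (abs_branchRatio_lt_one hμ) h
    _ = 2 * |branchRatio μ| ^ K *
        (branchShift μ ν * (|branchRatio μ| / (1 - |branchRatio μ|))) := by ring
    _ = 2 * ν * |branchRatio μ| ^ K := by rw [branchShift_mul_abs_branchRatio_div hμ]; ring

end Dynamics

section LiYorke

variable {μ ν : ℝ}

lemma limsup_abs_iterate_fmap_sub_pos (hμ : 1 < μ) (hν : 0 < ν) {ω ω' : ℕ → Bool}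
    (h : ∃ᶠ m in atTop, ω m ≠ ω' m) :
    0 < limsup (fun n : ℕ => |(fmap μ ν)^[n] (itineraryPoint μ ν ω) -
      (fmap μ ν)^[n] (itineraryPoint μ ν ω')|) atTop := by
  have hbdd : IsBoundedUnder (· ≤ ·) atTop fun n : ℕ => |(fmap μ ν)^[n] (itineraryPoint μ ν ω) -
      (fmap μ ν)^[n] (itineraryPoint μ ν ω')| :=
    isBoundedUnder_of ⟨μ * ν + μ * ν, fun n => (abs_sub _ _).trans (add_le_add
      (abs_iterate_fmap_itineraryPoint_le hμ hν ω n)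
      (abs_iterate_fmap_itineraryPoint_le hμ hν ω' n))⟩
  have hsep : ∃ᶠ n in atTop, 2 * ν / μ ≤ |(fmap μ ν)^[n] (itineraryPoint μ ν ω) -
      (fmap μ ν)^[n] (itineraryPoint μ ν ω')| :=
    tendsto_two_mul_atTop.frequently <| h.mono fun m hm => by
      rw [iterate_fmap_two_mul_itineraryPoint hμ hν, iterate_fmap_two_mul_itineraryPoint hμ hν]
      exact le_abs_itineraryPoint_sub hμ hν (by simpa using hm)
  exact (by positivity : (0 : ℝ) < 2 * ν / μ).trans_le (le_limsup_of_frequently_le hsep hbdd)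

lemma liminf_abs_iterate_fmap_sub_eq_zero (hμ : 1 < μ) (hν : 0 < ν) {ω ω' : ℕ → Bool}
    (h : ∀ K, ∃ᶠ a in atTop, ∀ i < K, ω (a + i) = ω' (a + i)) :
    liminf (fun n : ℕ => |(fmap μ ν)^[n] (itineraryPoint μ ν ω) -
      (fmap μ ν)^[n] (itineraryPoint μ ν ω')|) atTop = 0 := by
  refine liminf_eq_zero_of_frequently_le (fun n => abs_nonneg _) fun ε hε => ?_
  obtain ⟨K, hK⟩ := exists_pow_lt_of_lt_one (div_pos hε (by positivity : (0 : ℝ) < 2 * ν))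
    (abs_branchRatio_lt_one hμ)
  refine tendsto_two_mul_atTop.frequently <| (h K).mono fun a ha => ?_
  rw [iterate_fmap_two_mul_itineraryPoint hμ hν, iterate_fmap_two_mul_itineraryPoint hμ hν]
  exact (abs_itineraryPoint_sub_le hμ hν ha).trans ((lt_div_iff₀' (by positivity)).1 hK).le

end LiYorke

/-- The interval `[−μν, μν]` contains Li–Yorke chaotic orbits of `f`: there is an
uncountable scrambled set `S ⊆ [−μν, μν]` containing no periodic points. -/
theorem fmap_liYorke_chaos (μ ν : ℝ) (hμ : 1 < μ) (hν : 0 < ν) :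
    ∃ S : Set ℝ, S ⊆ Icc (-(μ * ν)) (μ * ν) ∧ ¬ S.Countable ∧
      (∀ p ∈ S, ¬ ∃ n : ℕ, 0 < n ∧ (fmap μ ν)^[n] p = p) ∧
      ∀ p ∈ S, ∀ q ∈ S, p ≠ q →
        0 < limsup (fun n : ℕ => |(fmap μ ν)^[n] p - (fmap μ ν)^[n] q|) atTop ∧
        liminf (fun n : ℕ => |(fmap μ ν)^[n] p - (fmap μ ν)^[n] q|) atTop = 0 := by
  have hinj : Function.Injective (itineraryPoint μ ν ∘ code) :=
    (itineraryPoint_injective hμ hν).comp code_injective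
  refine ⟨range (itineraryPoint μ ν ∘ code), ?_, ?_, ?_, ?_⟩
  · rintro _ ⟨u, rfl⟩
    exact abs_le.1 (abs_iterate_fmap_itineraryPoint_le hμ hν (code u) 0)
  · exact not_countable_range_of_injective hinj
  · rintro _ ⟨u, rfl⟩ ⟨n, hn, hper⟩
    exact code_shift_ne hn (shift_eq_of_iterate_fmap_eq hμ hν hper)
  · rintro _ ⟨u, rfl⟩ _ ⟨u', rfl⟩ hne
    exact ⟨limsup_abs_iterate_fmap_sub_pos hμ hν (frequently_code_ne (ne_of_apply_ne _ hne)),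
      liminf_abs_iterate_fmap_sub_eq_zero hμ hν fun K => (frequently_forall_code_eq_false K).mono
        fun a ha i hi => (ha u i hi).trans (ha u' i hi).symm⟩
end
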